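/- arXiv:math/0407028 — 2 statements merged into one kernel-verified Lean document; each statement's English description precedes it below -/
import Mathlib

section
/- Define for v ∈ ℝ³ with v̂ = v/√(1+|v|²) and unit vector ω the kernel a^{tt}(ω,v̂) = (3|v̂|⁴ - (ω·v̂)²|v̂|² - |v̂|² + 3(ω·v̂)² + 4(ω·v̂)|v̂|²)/(1+ω·v̂)⁴. Then ∫_{|ω|=1} a^{tt}(ω,v̂) dω = 0 for every v ∈ ℝ³. -/
open MeasureTheory Real
open scoped RealInnerProductSpace

/-- The relativistic velocity `v̂ = v/√(1+|v|²)`. -/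
noncomputable def vhat (v : EuclideanSpace ℝ (Fin 3)) : EuclideanSpace ℝ (Fin 3) :=
  (Real.sqrt (1 + ‖v‖ ^ 2))⁻¹ • v

/-- The kernel `a^{tt}(ω,v̂)` appearing in the representation of `∂ₜ² u`. -/
noncomputable def attKernel (ω v : EuclideanSpace ℝ (Fin 3)) : ℝ :=
  (3 * ‖vhat v‖ ^ 4 - ⟪ω, vhat v⟫ ^ 2 * ‖vhat v‖ ^ 2 - ‖vhat v‖ ^ 2
      + 3 * ⟪ω, vhat v⟫ ^ 2 + 4 * ⟪ω, vhat v⟫ * ‖vhat v‖ ^ 2)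
    / (1 + ⟪ω, vhat v⟫) ^ 4

/-!
Writing `u = v̂`, the kernel is `g ⟪ω, u⟫` for a rational function `g` that is continuous on
`[-|u|, |u|]` because `|u| < 1`. Archimedes' hat-box theorem turns its sphere integral into
`2π ∫_{-1}^{1} g (|u| s) ds`, and with `r = |u|` the integrand `g (r s)` has the antiderivative
`r² (s² - 1) (s + r) / (1 + r s)³`, which vanishes at both ends.

For Archimedes' theorem, the sphere integral of `f` is `dim E` times the integral of
`x ↦ f (x / |x|)` over the unit ball. After a reflection taking `u / |u|` to the first basis
vector, the ball integral is computed in cylindrical coordinates about that axis and then in polar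
coordinates `(R, θ)` in the half-plane `(x₀, ρ)`, where it splits as
`∫₀¹ R² dR · ∫₀^π sin θ g (cos θ) dθ`.
-/

open Metric Set
open scoped BoundedContinuousFunction

local notation "ℝ²" => EuclideanSpace ℝ (Fin 2)
local notation "ℝ³" => EuclideanSpace ℝ (Fin 3)
local notation "σ" => Measure.toSphere (volume : Measure ℝ³)

namespace MeasureTheory.Measure

section NormedSpace

variable {E : Type*} [NormedAddCommGroup E] [NormedSpace ℝ E] [FiniteDimensional ℝ E]
  [MeasurableSpace E] [BorelSpace E] [Nontrivial E]

theorem integral_indicator_Iio_one_volumeIoiPow (n : ℕ) :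
    ∫ ρ : Ioi (0 : ℝ), (Iio 1).indicator (1 : ℝ → ℝ) ρ ∂volumeIoiPow n = 1 / (n + 1) := by
  have : (fun ρ : Ioi (0 : ℝ) => (Iio 1).indicator (1 : ℝ → ℝ) ρ)
      = (Iio ⟨1, mem_Ioi.2 one_pos⟩).indicator 1 := by
    ext ρ
    simp [indicator_apply, ← Subtype.coe_lt_coe]
  rw [this, integral_indicator_one measurableSet_Iio, measureReal_def, volumeIoiPow_apply_Iio,
    ENNReal.toReal_ofReal (by positivity)]
  norm_num

theorem integral_toSphere_eq_setIntegral_ball (μ : Measure E) [μ.IsAddHaarMeasure]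
    (f : E → ℝ) :
    ∫ ω, f ω ∂μ.toSphere = Module.finrank ℝ E * ∫ x in ball (0 : E) 1, f (‖x‖⁻¹ • x) ∂μ := by
  have hball : ∫ x in ball (0 : E) 1, f (‖x‖⁻¹ • x) ∂μ
      = ∫ p, f p.1 * (Iio 1).indicator (1 : ℝ → ℝ) p.2
          ∂(μ.toSphere.prod (volumeIoiPow (Module.finrank ℝ E - 1))) := by
    rw [← integral_indicator measurableSet_ball, ← restrict_compl_singleton (μ := μ) 0,
      ← integral_subtype_comap (measurableSet_singleton 0).compl, restrict_compl_singleton,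
      ← (μ.measurePreserving_homeomorphUnitSphereProd).integral_comp
        (homeomorphUnitSphereProd E).measurableEmbedding]
    refine integral_congr_ae (ae_of_all _ fun x => ?_)
    by_cases hx : ‖(x : E)‖ < 1 <;> simp [hx]
  rw [hball, integral_prod_mul (fun ω : sphere (0 : E) 1 => f ω)
      (fun ρ : Ioi (0 : ℝ) => (Iio 1).indicator (1 : ℝ → ℝ) ρ),
    integral_indicator_Iio_one_volumeIoiPow, Nat.cast_pred Module.finrank_pos, sub_add_cancel,
    mul_one_div, mul_div_cancel₀ _ (Nat.cast_ne_zero.2 Module.finrank_pos.ne')]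

end NormedSpace

theorem integral_toSphere_comp_linearIsometryEquiv {E : Type*} [NormedAddCommGroup E]
    [InnerProductSpace ℝ E] [FiniteDimensional ℝ E] [MeasurableSpace E] [BorelSpace E]
    [Nontrivial E] (L : E ≃ₗᵢ[ℝ] E) (f : E → ℝ) :
    ∫ ω, f (L ω) ∂(volume : Measure E).toSphere = ∫ ω, f ω ∂(volume : Measure E).toSphere := by
  rw [integral_toSphere_eq_setIntegral_ball volume (fun y => f (L y)),
    integral_toSphere_eq_setIntegral_ball]
  congr 1
  have h := L.measurePreserving.setIntegral_preimage_emb L.toHomeomorph.measurableEmbedding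
    (fun y => f (‖y‖⁻¹ • y)) (ball 0 1)
  simpa [L.toIsometryEquiv.preimage_ball] using h

end MeasureTheory.Measure

namespace EuclideanSpace

noncomputable def finSuccMeasurableEquiv (n : ℕ) :
    EuclideanSpace ℝ (Fin (n + 1)) ≃ᵐ ℝ × EuclideanSpace ℝ (Fin n) :=
  (MeasurableEquiv.toLp 2 _).symm.trans <|
    (MeasurableEquiv.piFinSuccAbove (fun _ => ℝ) 0).trans <|
      .prodCongr (.refl ℝ) (MeasurableEquiv.toLp 2 _)

theorem measurePreserving_finSuccMeasurableEquiv (n : ℕ) :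
    MeasurePreserving (finSuccMeasurableEquiv n) :=
  (volume_preserving_symm_measurableEquiv_toLp _).trans <|
    (volume_preserving_piFinSuccAbove (fun _ => ℝ) 0).trans <|
      (MeasurePreserving.id volume).prod (volume_preserving_symm_measurableEquiv_toLp _).symm

theorem finSuccMeasurableEquiv_fst (n : ℕ) (x : EuclideanSpace ℝ (Fin (n + 1))) :
    (finSuccMeasurableEquiv n x).1 = x 0 := rfl

theorem norm_sq_eq_finSuccMeasurableEquiv (n : ℕ) (x : EuclideanSpace ℝ (Fin (n + 1))) :
    ‖x‖ ^ 2 = (finSuccMeasurableEquiv n x).1 ^ 2 + ‖(finSuccMeasurableEquiv n x).2‖ ^ 2 := by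
  simp [norm_sq_eq, Fin.sum_univ_succ, finSuccMeasurableEquiv, MeasurableEquiv.prodCongr,
    Fin.tail]

theorem integral_fin_two_fun_norm (f : ℝ → ℝ) :
    ∫ y : ℝ², f ‖y‖ = 2 * π * ∫ ρ in Ioi (0 : ℝ), ρ * f ρ := by
  have h := integral_fun_norm_addHaar (volume : Measure ℝ²) f
  simp only [finrank_euclideanSpace_fin, measureReal_def, volume_ball_fin_two] at h
  simpa [mul_assoc, ENNReal.toReal_ofReal pi_pos.le] using h

theorem integral_fin_three_eq_cylindrical (F : ℝ → ℝ → ℝ)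
    (hF : Integrable fun p : ℝ × ℝ² => F p.1 √(p.1 ^ 2 + ‖p.2‖ ^ 2)) :
    ∫ x : ℝ³, F (x 0) ‖x‖ = 2 * π * ∫ t, ∫ ρ in Ioi (0 : ℝ), ρ * F t √(t ^ 2 + ρ ^ 2) := by
  have hx : ∀ x : ℝ³, F (x 0) ‖x‖ = F (finSuccMeasurableEquiv 2 x).1
      √((finSuccMeasurableEquiv 2 x).1 ^ 2 + ‖(finSuccMeasurableEquiv 2 x).2‖ ^ 2) := fun x => by
    rw [← norm_sq_eq_finSuccMeasurableEquiv, sqrt_sq (norm_nonneg x), finSuccMeasurableEquiv_fst]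
  simp_rw [hx]
  rw [(measurePreserving_finSuccMeasurableEquiv 2).integral_comp
      (MeasurableEquiv.measurableEmbedding _) (fun p => F p.1 √(p.1 ^ 2 + ‖p.2‖ ^ 2)),
    Measure.volume_eq_prod, integral_prod _ (by rwa [← Measure.volume_eq_prod]),
    ← integral_const_mul]
  congr 1 with t
  exact integral_fin_two_fun_norm (fun ρ => F t √(t ^ 2 + ρ ^ 2))

end EuclideanSpace

theorem integral_integral_Ioi_eq_polarCoord (G : ℝ → ℝ → ℝ)
    (hG : IntegrableOn (fun p : ℝ × ℝ => p.2 * G p.1 p.2) (univ ×ˢ Ioi 0)) :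
    ∫ t, ∫ ρ in Ioi (0 : ℝ), ρ * G t ρ
      = ∫ q in Ioi (0 : ℝ) ×ˢ Ioo 0 π,
          q.1 * (q.1 * sin q.2) * G (q.1 * cos q.2) (q.1 * sin q.2) := by
  have hsub : Ioi (0 : ℝ) ×ˢ Ioo 0 π ⊆ polarCoord.target :=
    prod_mono subset_rfl (Ioo_subset_Ioo_left (by linarith [pi_pos]))
  have hpolar : ∀ q ∈ polarCoord.target,
      q.1 • (univ ×ˢ Ioi 0).indicator (fun p : ℝ × ℝ => p.2 * G p.1 p.2) (polarCoord.symm q)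
        = (Ioi (0 : ℝ) ×ˢ Ioo 0 π).indicator
            (fun q => q.1 * (q.1 * sin q.2) * G (q.1 * cos q.2) (q.1 * sin q.2)) q := by
    rintro ⟨r, θ⟩ ⟨hr, hθ⟩
    simp only [mem_Ioi, mem_Ioo] at hr hθ
    have hsin : 0 < r * sin θ ↔ 0 < θ := by
      rw [mul_pos_iff_of_pos_left hr]
      refine ⟨fun h => ?_, fun h => sin_pos_of_pos_of_lt_pi h hθ.2⟩
      by_contra! h'
      linarith [sin_nonpos_of_nonpos_of_neg_pi_le h' hθ.1.le]
    simp [indicator_apply, polarCoord_symm_apply, hsin, hr, hθ.2, mul_assoc]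
  calc ∫ t, ∫ ρ in Ioi (0 : ℝ), ρ * G t ρ
      = ∫ p in univ ×ˢ Ioi 0, p.2 * G p.1 p.2 := by
        rw [Measure.volume_eq_prod, setIntegral_prod _ (by rwa [← Measure.volume_eq_prod]),
          Measure.restrict_univ]
    _ = ∫ q in polarCoord.target, (Ioi (0 : ℝ) ×ˢ Ioo 0 π).indicator
            (fun q => q.1 * (q.1 * sin q.2) * G (q.1 * cos q.2) (q.1 * sin q.2)) q := by
        rw [← integral_indicator (MeasurableSet.univ.prod measurableSet_Ioi),
          ← integral_comp_polarCoord_symm]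
        exact setIntegral_congr_fun polarCoord.open_target.measurableSet hpolar
    _ = _ := by
        rw [setIntegral_indicator (measurableSet_Ioi.prod measurableSet_Ioo),
          inter_eq_right.2 hsub]

theorem integral_Ioi_indicator_Iio_one_sq :
    ∫ r in Ioi (0 : ℝ), (Iio 1).indicator (fun r => r ^ 2) r = 1 / 3 := by
  rw [setIntegral_indicator measurableSet_Iio, Ioi_inter_Iio, ← integral_Ioc_eq_integral_Ioo,
    ← intervalIntegral.integral_of_le zero_le_one, integral_pow]
  norm_num

theorem integral_Ioo_sin_mul_comp_cos {g : ℝ → ℝ} (hg : Continuous g) :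
    ∫ θ in Ioo 0 π, sin θ * g (cos θ) = ∫ s in (-1)..1, g s := by
  have h := intervalIntegral.integral_comp_mul_deriv (a := 0) (b := π) (g := g)
    (fun θ _ => hasDerivAt_cos θ) continuous_sin.neg.continuousOn hg
  simp only [Function.comp_apply, mul_neg, intervalIntegral.integral_neg, cos_zero, cos_pi] at h
  rw [← integral_Ioc_eq_integral_Ioo, ← intervalIntegral.integral_of_le pi_pos.le,
    intervalIntegral.integral_symm 1 (-1), ← h, neg_neg]
  simp_rw [mul_comm]

theorem integrable_of_bounded_of_eq_zero_off {X : Type*} [MeasurableSpace X] {μ : Measure X}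
    {f : X → ℝ} {s : Set X} (hs : μ s ≠ ⊤) (hf : AEStronglyMeasurable f μ) {M : ℝ}
    (hM : ∀ x, |f x| ≤ M) (h0 : ∀ x ∉ s, f x = 0) : Integrable f μ :=
  (Measure.integrableOn_of_bounded hs hf (ae_of_all _ hM)).integrable_of_forall_notMem_eq_zero h0

theorem one_le_sqrt_of_notMem_ball {E : Type*} [SeminormedAddCommGroup E] {p : ℝ × E}
    (hp : p ∉ ball 0 1) : 1 ≤ √(p.1 ^ 2 + ‖p.2‖ ^ 2) := by
  rw [mem_ball_zero_iff, Prod.norm_def, not_lt, le_max_iff, Real.norm_eq_abs] at hp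
  rw [one_le_sqrt]
  rcases hp with h | h <;> nlinarith [sq_abs p.1, abs_nonneg p.1, norm_nonneg p.2]

/-- `x ↦ ballProfile g (x 0) ‖x‖` is `x ↦ g (x 0 / ‖x‖)` cut off outside the unit ball. -/
noncomputable def ballProfile (g : ℝ → ℝ) (t w : ℝ) : ℝ :=
  (Iio 1).indicator (fun w => g (t / w)) w

section ballProfile

variable (g : ℝ →ᵇ ℝ)

theorem ballProfile_of_one_le {t w : ℝ} (hw : 1 ≤ w) : ballProfile g t w = 0 := by
  simp [ballProfile, hw]

theorem abs_ballProfile_le (t w : ℝ) : |ballProfile g t w| ≤ ‖g‖ := by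
  by_cases hw : w < 1 <;> simp [ballProfile, hw, ← Real.norm_eq_abs, g.norm_coe_le_norm]

theorem measurable_ballProfile : Measurable (Function.uncurry (ballProfile g)) :=
  (g.continuous.measurable.comp (measurable_fst.div measurable_snd)).indicator
    (measurableSet_Iio.preimage measurable_snd)

theorem integrable_ballProfile_cylindrical :
    Integrable fun p : ℝ × ℝ² => ballProfile g p.1 √(p.1 ^ 2 + ‖p.2‖ ^ 2) :=
  integrable_of_bounded_of_eq_zero_off (s := ball 0 1) measure_ball_lt_top.ne
    ((measurable_ballProfile g).comp (measurable_fst.prodMk (by fun_prop))).aestronglyMeasurable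
    (fun p => abs_ballProfile_le g _ _)
    fun p hp => ballProfile_of_one_le g (one_le_sqrt_of_notMem_ball hp)

theorem integrableOn_ballProfile_polar :
    IntegrableOn (fun p : ℝ × ℝ => p.2 * ballProfile g p.1 √(p.1 ^ 2 + p.2 ^ 2))
      (univ ×ˢ Ioi 0) := by
  refine Integrable.integrableOn <| integrable_of_bounded_of_eq_zero_off (s := ball 0 1)
    (M := ‖g‖) measure_ball_lt_top.ne
    (measurable_snd.mul ((measurable_ballProfile g).comp
      (measurable_fst.prodMk (by fun_prop)))).aestronglyMeasurable (fun p => ?_) fun p hp => ?_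
  · by_cases h : 1 ≤ √(p.1 ^ 2 + p.2 ^ 2)
    · simp [ballProfile_of_one_le g h]
    · have hp2 : |p.2| ≤ 1 := (abs_le_sqrt (by nlinarith [sq_nonneg p.1])).trans (not_le.1 h).le
      rw [abs_mul]
      exact (mul_le_of_le_one_left (abs_nonneg _) hp2).trans (abs_ballProfile_le g _ _)
  · simpa using mul_eq_zero_of_right _
      (ballProfile_of_one_le g (by simpa using one_le_sqrt_of_notMem_ball hp))

theorem ballProfile_polarCoord {r : ℝ} (hr : 0 < r) (θ : ℝ) :
    r * (r * sin θ) * ballProfile g (r * cos θ) √((r * cos θ) ^ 2 + (r * sin θ) ^ 2)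
      = (Iio 1).indicator (fun r => r ^ 2) r * (sin θ * g (cos θ)) := by
  have hsqrt : √((r * cos θ) ^ 2 + (r * sin θ) ^ 2) = r := by
    rw [mul_pow, mul_pow, ← mul_add, cos_sq_add_sin_sq, mul_one, sqrt_sq hr.le]
  by_cases h1 : r < 1
  · simp [ballProfile, hsqrt, h1, hr.ne']
    ring
  · simp [ballProfile, hsqrt, h1]

end ballProfile

theorem setIntegral_ball_comp_apply_zero_div_norm (g : ℝ →ᵇ ℝ) :
    ∫ x in ball (0 : ℝ³) 1, g (x 0 / ‖x‖) = 2 * π / 3 * ∫ s in (-1)..1, g s := by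
  rw [← integral_indicator measurableSet_ball]
  calc ∫ x : ℝ³, (ball 0 1).indicator (fun x => g (x 0 / ‖x‖)) x
      = ∫ x : ℝ³, ballProfile g (x 0) ‖x‖ := by
        congr 1 with x
        simp only [ballProfile, indicator, mem_ball_zero_iff, mem_Iio]
    _ = 2 * π * ∫ q in Ioi (0 : ℝ) ×ˢ Ioo 0 π,
          (Iio 1).indicator (fun r => r ^ 2) q.1 * (sin q.2 * g (cos q.2)) := by
        rw [EuclideanSpace.integral_fin_three_eq_cylindrical _
            (integrable_ballProfile_cylindrical g),
          integral_integral_Ioi_eq_polarCoord _ (integrableOn_ballProfile_polar g),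
          setIntegral_congr_fun (measurableSet_Ioi.prod measurableSet_Ioo)
            fun q hq => ballProfile_polarCoord g hq.1 q.2]
    _ = 2 * π / 3 * ∫ s in (-1)..1, g s := by
        rw [Measure.volume_eq_prod, setIntegral_prod_mul
            (fun r => (Iio 1).indicator (fun r => r ^ 2) r) (fun θ => sin θ * g (cos θ)),
          integral_Ioi_indicator_Iio_one_sq, integral_Ioo_sin_mul_comp_cos g.continuous]
        ring

theorem integral_toSphere_comp_apply_zero (g : ℝ →ᵇ ℝ) :
    ∫ ω : sphere (0 : ℝ³) 1, g ((ω : ℝ³) 0) ∂σ = 2 * π * ∫ s in (-1)..1, g s := by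
  rw [Measure.integral_toSphere_eq_setIntegral_ball volume (fun x : ℝ³ => g (x 0)),
    finrank_euclideanSpace_fin]
  simp only [PiLp.smul_apply, smul_eq_mul, inv_mul_eq_div,
    setIntegral_ball_comp_apply_zero_div_norm]
  push_cast
  ring

theorem integral_toSphere_comp_inner_of_norm_eq_one {g : ℝ → ℝ}
    (hg : ContinuousOn g (Icc (-1) 1)) {e : ℝ³} (he : ‖e‖ = 1) :
    ∫ ω : sphere (0 : ℝ³) 1, g ⟪(ω : ℝ³), e⟫ ∂σ = 2 * π * ∫ s in (-1)..1, g s := by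
  set g' : ℝ →ᵇ ℝ := (BoundedContinuousFunction.mkOfCompact
    ⟨(Icc (-1) 1).domRestrict g, hg.domRestrict⟩).compContinuous
      ⟨projIcc (-1) 1 (by norm_num), continuous_projIcc⟩
  have hg' : ∀ s ∈ Icc (-1 : ℝ) 1, g' s = g s := fun s hs => by
    simp [g', projIcc_of_mem _ hs, Set.domRestrict]
  have hinner : ∀ ω : sphere (0 : ℝ³) 1, ⟪(ω : ℝ³), e⟫ ∈ Icc (-1) 1 := fun ω => by
    rw [mem_Icc, ← abs_le]
    simpa [he] using abs_real_inner_le_norm (ω : ℝ³) e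
  set e₀ : ℝ³ := EuclideanSpace.single 0 1
  set L := (ℝ ∙ (e₀ - e))ᗮ.reflection
  have hL : L e₀ = e := Submodule.reflection_sub (by simp [e₀, he])
  calc ∫ ω : sphere (0 : ℝ³) 1, g ⟪(ω : ℝ³), e⟫ ∂σ
      = ∫ ω : sphere (0 : ℝ³) 1, g' ⟪L ω, L e₀⟫ ∂σ := by
        rw [Measure.integral_toSphere_comp_linearIsometryEquiv L (fun x => g' ⟪x, L e₀⟫), hL]
        exact integral_congr_ae (ae_of_all _ fun ω => (hg' _ (hinner ω)).symm)
    _ = 2 * π * ∫ s in (-1)..1, g' s := by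
        simp only [LinearIsometryEquiv.inner_map_map, e₀, EuclideanSpace.inner_single_right,
          one_mul]
        exact integral_toSphere_comp_apply_zero g'
    _ = 2 * π * ∫ s in (-1)..1, g s := by
        rw [intervalIntegral.integral_congr fun s hs =>
          hg' s (by rwa [uIcc_of_le (by norm_num)] at hs)]

theorem integral_toSphere_comp_inner {g : ℝ → ℝ} (u : ℝ³) (hg : ContinuousOn g (Icc (-‖u‖) ‖u‖)) :
    ∫ ω : sphere (0 : ℝ³) 1, g ⟪(ω : ℝ³), u⟫ ∂σ = 2 * π * ∫ s in (-1)..1, g (‖u‖ * s) := by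
  obtain ⟨e, he, hue⟩ : ∃ e : ℝ³, ‖e‖ = 1 ∧ u = ‖u‖ • e := by
    by_cases hu : u = 0
    · exact ⟨EuclideanSpace.single 0 1, by simp, by simp [hu]⟩
    · exact ⟨‖u‖⁻¹ • u, norm_smul_inv_norm hu, by simp [smul_smul, hu]⟩
  have hgs : ContinuousOn (fun s => g (‖u‖ * s)) (Icc (-1) 1) := by
    refine hg.comp (by fun_prop) fun s hs => ?_
    rw [mem_Icc] at hs ⊢
    constructor <;> nlinarith [norm_nonneg u]
  have hinner : ∀ x, ⟪x, u⟫ = ‖u‖ * ⟪x, e⟫ := fun x => by rw [← real_inner_smul_right, ← hue]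
  simpa only [hinner] using integral_toSphere_comp_inner_of_norm_eq_one hgs he

theorem integral_attKernel_profile {r : ℝ} (hr : |r| < 1) :
    ∫ s in (-1)..1, (3 * r ^ 4 - (r * s) ^ 2 * r ^ 2 - r ^ 2 + 3 * (r * s) ^ 2
        + 4 * (r * s) * r ^ 2) / (1 + r * s) ^ 4 = 0 := by
  have hpos : ∀ s ∈ uIcc (-1 : ℝ) 1, 0 < 1 + r * s := fun s hs => by
    rw [uIcc_of_le (by norm_num), mem_Icc, ← abs_le] at hs
    have : |r * s| < 1 := by
      rw [abs_mul]
      exact (mul_le_of_le_one_right (abs_nonneg r) hs).trans_lt hr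
    linarith [neg_abs_le (r * s)]
  have hderiv : ∀ s ∈ uIcc (-1 : ℝ) 1,
      HasDerivAt (fun s => r ^ 2 * (s ^ 2 - 1) * (s + r) / (1 + r * s) ^ 3)
        ((3 * r ^ 4 - (r * s) ^ 2 * r ^ 2 - r ^ 2 + 3 * (r * s) ^ 2
          + 4 * (r * s) * r ^ 2) / (1 + r * s) ^ 4) s := fun s hs => by
    have hnum : HasDerivAt (fun s => r ^ 2 * (s ^ 2 - 1) * (s + r))
        (r ^ 2 * (2 * s) * (s + r) + r ^ 2 * (s ^ 2 - 1)) s := by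
      simpa using (((hasDerivAt_pow 2 s).sub_const 1).const_mul (r ^ 2)).fun_mul
        ((hasDerivAt_id' s).add_const r)
    have hden : HasDerivAt (fun s => (1 + r * s) ^ 3) (3 * (1 + r * s) ^ 2 * r) s := by
      simpa using (((hasDerivAt_id' s).const_mul r).const_add 1).fun_pow 3
    refine (hnum.div hden (pow_ne_zero 3 (hpos s hs).ne')).congr_deriv ?_
    field_simp [(hpos s hs).ne']
    ring
  rw [intervalIntegral.integral_eq_sub_of_hasDerivAt hderiv
    (ContinuousOn.intervalIntegrable <|
      ContinuousOn.div (by fun_prop) (by fun_prop) fun s hs => (pow_pos (hpos s hs) 4).ne')]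
  norm_num

theorem norm_vhat_lt_one (v : ℝ³) : ‖vhat v‖ < 1 := by
  have hs : 0 < √(1 + ‖v‖ ^ 2) := sqrt_pos.2 (by positivity)
  rw [vhat, norm_smul, norm_inv, Real.norm_of_nonneg hs.le, inv_mul_lt_iff₀ hs, mul_one,
    lt_sqrt (norm_nonneg v)]
  linarith

/-- The averaging property of the kernel `a^{tt}`: its integral over the unit sphere
vanishes for every `v ∈ ℝ³`. -/
theorem attKernel_sphere_average_zero (v : EuclideanSpace ℝ (Fin 3)) :
    ∫ ω : Metric.sphere (0 : EuclideanSpace ℝ (Fin 3)) 1,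
        attKernel (ω : EuclideanSpace ℝ (Fin 3)) v
      ∂((volume : Measure (EuclideanSpace ℝ (Fin 3))).toSphere)
    = 0 := by
  have hr := norm_vhat_lt_one v
  have hcont : ContinuousOn (fun a => (3 * ‖vhat v‖ ^ 4 - a ^ 2 * ‖vhat v‖ ^ 2 - ‖vhat v‖ ^ 2
      + 3 * a ^ 2 + 4 * a * ‖vhat v‖ ^ 2) / (1 + a) ^ 4) (Icc (-‖vhat v‖) ‖vhat v‖) :=
    ContinuousOn.div (by fun_prop) (by fun_prop) fun a ha => pow_ne_zero 4 (by linarith [ha.1])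
  unfold attKernel
  rw [integral_toSphere_comp_inner (vhat v) hcont,
    integral_attKernel_profile (by rwa [abs_norm]), mul_zero]
end

section
/- Under the hypotheses of the method of characteristics with f₀, g ∈ C¹ (but not necessarily C²), the derivative ∂_z f exists and satisfies ∂_z f(t,z) = (∂_z f₀)(Z(0,t,z)) - ∫₀ᵗ (∂_z f)(s, Z(s,t,z))·(∂_z G)(s, Z(s,t,z)) ds + ∫₀ᵗ (∂_z g)(s, Z(s,t,z)) ds. -/
/-!
Fix `t, z` and put `W s = ∂_z Z(s,t,·)(z)` and `V s = ∂_z Z(t,s,·)(Z(s,t,z))`. By the flow property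
`V s = (W s)⁻¹`, and `W` solves the variational equation `W' = ∂_zG · W`, hence `V' = -V · ∂_zG`.
The flow property also gives `f(s, Z(s,t,y)) = f₀(Z(0,t,y)) + ∫₀ˢ g(r, Z(r,t,y)) dr`, so
`∂_zf(s, Z(s,t,z)) = M s ∘ V s`, where `M s` is the `y`-derivative of the right-hand side at `z`;
`M` is differentiable in `s` with `M' = ∂_zg · W`, using only the first derivatives of `g`.
Thus `Q s = ∂_zf(s, Z(s,t,z))` solves `Q' = ∂_zg - Q · ∂_zG`, and the identity is `Q` integrated
from `0` to `t`, with `Q 0 = ∂_zf₀(Z(0,t,z))` because `f(0,·) = f₀`.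
-/

open Set Filter Topology MeasureTheory intervalIntegral ContinuousLinearMap
open Function (uncurry)

section

variable {H E E' F : Type*} [NormedAddCommGroup H] [NormedSpace ℝ H]
  [NormedAddCommGroup E] [NormedSpace ℝ E] [NormedAddCommGroup E'] [NormedSpace ℝ E']
  [NormedAddCommGroup F] [NormedSpace ℝ F]

theorem ContDiff.differentiableAt_uncurry_right {Φ : H → E → F}
    (hΦ : ContDiff ℝ 1 (uncurry Φ)) (s : H) (x : E) : DifferentiableAt ℝ (Φ s) x :=
  (hΦ.comp (contDiff_const.prodMk contDiff_id)).differentiable one_ne_zero x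

theorem ContDiff.continuous_fderiv_uncurry_right {Φ : H → E → F}
    (hΦ : ContDiff ℝ 1 (uncurry Φ)) {γ : H → E} (hγ : Continuous γ) :
    Continuous fun s => fderiv ℝ (Φ s) (γ s) :=
  (hΦ.fderiv (contDiff_zero.2 hγ) (by norm_num)).continuous

theorem hasFDerivAt_intervalIntegral_of_contDiff_uncurry [ProperSpace E] [CompleteSpace F]
    {Φ : ℝ → E → F} (hΦ : ContDiff ℝ 1 (uncurry Φ)) (a b : ℝ) (z : E) :
    HasFDerivAt (fun w => ∫ s in a..b, Φ s w) (∫ s in a..b, fderiv ℝ (Φ s) z) z := by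
  have hslice : ∀ w, Continuous fun s => Φ s w := fun w =>
    hΦ.continuous.comp (continuous_id.prodMk continuous_const)
  have hΦ' : Continuous fun p : ℝ × E => fderiv ℝ (Φ p.1) p.2 :=
    ContDiff.continuous_fderiv_uncurry_right (Φ := fun p : ℝ × E => Φ p.1)
      (hΦ.comp (contDiff_fst.fst.prodMk contDiff_snd)) continuous_snd
  obtain ⟨C, hC⟩ := (isCompact_uIcc.prod (isCompact_closedBall z 1)).exists_bound_of_continuousOn
    hΦ'.continuousOn
  refine hasFDerivAt_integral_of_dominated_of_fderiv_le (bound := fun _ => C)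
    (Metric.ball_mem_nhds z one_pos) (.of_forall fun w => (hslice w).aestronglyMeasurable)
    ((hslice z).intervalIntegrable a b)
    (hΦ'.comp (continuous_id.prodMk continuous_const)).aestronglyMeasurable
    (ae_of_all _ fun s hs w hw => hC (s, w) ⟨uIoc_subset_uIcc hs, Metric.ball_subset_closedBall hw⟩)
    intervalIntegrable_const
    (ae_of_all _ fun s _ w _ => (hΦ.differentiableAt_uncurry_right s w).hasFDerivAt)

theorem hasFDerivAt_comp_add_intervalIntegral_comp [ProperSpace E] [CompleteSpace F]
    {X : ℝ → E → E'} {f₀ : E' → F} {g : ℝ → E' → F} (hX : ContDiff ℝ 1 (uncurry X))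
    (hf₀ : ContDiff ℝ 1 f₀) (hg : ContDiff ℝ 1 (uncurry g)) (a b : ℝ) (z : E) :
    HasFDerivAt (fun w => f₀ (X a w) + ∫ r in a..b, g r (X r w))
      (fderiv ℝ f₀ (X a z) ∘L fderiv ℝ (X a) z
        + ∫ r in a..b, fderiv ℝ (g r) (X r z) ∘L fderiv ℝ (X r) z) z := by
  have hgX : ContDiff ℝ 1 (uncurry fun r w => g r (X r w)) := hg.comp (contDiff_fst.prodMk hX)
  refine ((hf₀.differentiable one_ne_zero _).hasFDerivAt.comp z
    (hX.differentiableAt_uncurry_right a z).hasFDerivAt).add ?_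
  rw [← integral_congr fun r _ => fderiv_fun_comp z (hg.differentiableAt_uncurry_right r _)
    (hX.differentiableAt_uncurry_right r z)]
  exact hasFDerivAt_intervalIntegral_of_contDiff_uncurry hgX a b z

theorem eq_sub_integral_comp_add_integral_of_hasDerivAt [CompleteSpace F]
    {Q B : ℝ → E →L[ℝ] F} {A : ℝ → E →L[ℝ] E} (hQ : ∀ s, HasDerivAt Q (B s - Q s ∘L A s) s)
    (hA : Continuous A) (hB : Continuous B) (a b : ℝ) :
    Q b = Q a - (∫ s in a..b, Q s ∘L A s) + ∫ s in a..b, B s := by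
  have hQA : Continuous fun s => Q s ∘L A s :=
    (continuous_iff_continuousAt.2 fun s => (hQ s).continuousAt).clm_comp hA
  have hFTC := integral_eq_sub_of_hasDerivAt (fun s _ => hQ s) ((hB.sub hQA).intervalIntegrable a b)
  rw [integral_sub (hB.intervalIntegrable a b) (hQA.intervalIntegrable a b)] at hFTC
  calc Q b = Q a + (Q b - Q a) := by abel
    _ = _ := by rw [← hFTC]; abel

end

theorem HasDerivAt.of_mul_eq_one {R : Type*} [NormedRing R] [NormedAlgebra ℝ R] [CompleteSpace R]
    {W V : ℝ → R} {W' : R} {s : ℝ} (hWV : ∀ τ, W τ * V τ = 1) (hVW : ∀ τ, V τ * W τ = 1)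
    (hW : HasDerivAt W W' s) : HasDerivAt V (-(V s * W' * V s)) s := by
  let u : ℝ → Rˣ := fun τ => ⟨W τ, V τ, hWV τ, hVW τ⟩
  have h := (hasFDerivAt_ringInverse (𝕜 := ℝ) (u s)).comp_hasDerivAt s hW
  simp only [neg_apply, mulLeftRight_apply, Units.inv_mk, u] at h
  exact h.congr_of_eventuallyEq (.of_forall fun τ => (Ring.inverse_unit (u τ)).symm)

theorem ODE_solution_eventuallyEq_of_contDiff {E : Type*} [NormedAddCommGroup E]
    [NormedSpace ℝ E] {G : ℝ → E → E} (hG : ContDiff ℝ 1 (uncurry G)) {x y : ℝ → E} {t₀ : ℝ}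
    (hx : ∀ t, HasDerivAt x (G t (x t)) t) (hy : ∀ t, HasDerivAt y (G t (y t)) t)
    (heq : x t₀ = y t₀) : x =ᶠ[𝓝 t₀] y := by
  obtain ⟨K, U, hU, hK⟩ := hG.contDiffAt (x := (t₀, x t₀)).exists_lipschitzOnWith
  have hslice : ∀ t, LipschitzOnWith (K * 1) (G t) {w | (t, w) ∈ U} := fun t =>
    hK.comp (LipschitzWith.prodMk_left t).lipschitzOnWith fun _ hw => hw
  have hmem : ∀ {z : ℝ → E}, (∀ t, HasDerivAt z (G t (z t)) t) → z t₀ = x t₀ →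
      ∀ᶠ t in 𝓝 t₀, HasDerivAt z (G t (z t)) t ∧ z t ∈ {w | (t, w) ∈ U} := by
    intro z hz hz₀
    have hcont : ContinuousAt (fun t => (t, z t)) t₀ :=
      continuousAt_id.prodMk (hz t₀).continuousAt
    exact (Eventually.of_forall hz).and (hcont.preimage_mem_nhds (by rwa [hz₀]))
  exact ODE_solution_unique_of_eventually (.of_forall hslice) (hmem hx rfl) (hmem hy heq.symm) heq

theorem ODE_solution_eq_of_contDiff {E : Type*} [NormedAddCommGroup E]
    [NormedSpace ℝ E] {G : ℝ → E → E} (hG : ContDiff ℝ 1 (uncurry G)) {x y : ℝ → E} {t₀ : ℝ}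
    (hx : ∀ t, HasDerivAt x (G t (x t)) t) (hy : ∀ t, HasDerivAt y (G t (y t)) t)
    (heq : x t₀ = y t₀) : x = y := by
  have hcont : ∀ {z : ℝ → E}, (∀ t, HasDerivAt z (G t (z t)) t) → Continuous z := fun hz =>
    continuous_iff_continuousAt.2 fun t => (hz t).continuousAt
  have hclopen : IsClopen {t | x t = y t} :=
    ⟨isClosed_eq (hcont hx) (hcont hy), isOpen_iff_mem_nhds.2 fun t ht =>
      ODE_solution_eventuallyEq_of_contDiff hG hx hy ht⟩
  exact funext fun t => (hclopen.eq_univ ⟨t₀, heq⟩).superset (mem_univ t)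

/-- `Z s t z` is the position at time `s` of the solution of `ż = G(s, z)` passing through `z` at
time `t`. -/
structure IsC1Flow {E : Type*} [NormedAddCommGroup E] [NormedSpace ℝ E]
    (G : ℝ → E → E) (Z : ℝ → ℝ → E → E) : Prop where
  contDiff_field : ContDiff ℝ 1 (uncurry G)
  contDiff : ContDiff ℝ 1 fun p : ℝ × ℝ × E => Z p.1 p.2.1 p.2.2
  apply_self : ∀ t z, Z t t z = z
  hasDerivAt : ∀ s t z, HasDerivAt (fun s' => Z s' t z) (G s (Z s t z)) s

namespace IsC1Flow

variable {E F : Type*} [NormedAddCommGroup E] [NormedSpace ℝ E]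
  [NormedAddCommGroup F] [NormedSpace ℝ F] {G : ℝ → E → E} {Z : ℝ → ℝ → E → E}

theorem contDiff_uncurry (hZ : IsC1Flow G Z) (t : ℝ) : ContDiff ℝ 1 (uncurry fun s => Z s t) :=
  hZ.contDiff.comp (contDiff_fst.prodMk (contDiff_const.prodMk contDiff_snd))

theorem continuous_apply (hZ : IsC1Flow G Z) (t : ℝ) (z : E) : Continuous fun s => Z s t z :=
  (hZ.contDiff_uncurry t).continuous.comp (continuous_id.prodMk continuous_const)

theorem differentiableAt (hZ : IsC1Flow G Z) (s t : ℝ) (w : E) : DifferentiableAt ℝ (Z s t) w :=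
  (hZ.contDiff_uncurry t).differentiableAt_uncurry_right s w

theorem apply_apply (hZ : IsC1Flow G Z) (a b c : ℝ) (w : E) : Z a b (Z b c w) = Z a c w :=
  congrFun (ODE_solution_eq_of_contDiff hZ.contDiff_field (fun s => hZ.hasDerivAt s b _)
    (fun s => hZ.hasDerivAt s c w) (t₀ := b) (by rw [hZ.apply_self])) a

theorem fderiv_eq_comp (hZ : IsC1Flow G Z) (a b c : ℝ) (w : E) :
    fderiv ℝ (Z a c) w = fderiv ℝ (Z a b) (Z b c w) ∘L fderiv ℝ (Z b c) w := by
  rw [← fderiv_comp w (hZ.differentiableAt a b _) (hZ.differentiableAt b c w)]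
  exact congrArg (fderiv ℝ · w) (funext fun w => (hZ.apply_apply a b c w).symm)

theorem fderiv_self (hZ : IsC1Flow G Z) (t : ℝ) (w : E) :
    fderiv ℝ (Z t t) w = ContinuousLinearMap.id ℝ E := by
  rw [show Z t t = id from funext (hZ.apply_self t), fderiv_id]

theorem fderiv_comp_fderiv_flip (hZ : IsC1Flow G Z) (a b : ℝ) (w : E) :
    fderiv ℝ (Z a b) (Z b a w) ∘L fderiv ℝ (Z b a) w = ContinuousLinearMap.id ℝ E := by
  rw [← hZ.fderiv_eq_comp, hZ.fderiv_self]

theorem fderiv_comp_fderiv_inv (hZ : IsC1Flow G Z) (t : ℝ) (z : E) (s : ℝ) :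
    fderiv ℝ (Z s t) z ∘L fderiv ℝ (Z t s) (Z s t z) = ContinuousLinearMap.id ℝ E := by
  simpa only [hZ.apply_apply, hZ.apply_self] using hZ.fderiv_comp_fderiv_flip s t (Z s t z)

variable [ProperSpace E]

theorem hasDerivAt_fderiv (hZ : IsC1Flow G Z) (t : ℝ) (z : E) (s : ℝ) :
    HasDerivAt (fun s => fderiv ℝ (Z s t) z)
      (fderiv ℝ (G s) (Z s t z) ∘L fderiv ℝ (Z s t) z) s := by
  have hAW : Continuous fun r => fderiv ℝ (G r) (Z r t z) ∘L fderiv ℝ (Z r t) z :=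
    (hZ.contDiff_field.continuous_fderiv_uncurry_right (hZ.continuous_apply t z)).clm_comp
      ((hZ.contDiff_uncurry t).continuous_fderiv_uncurry_right continuous_const)
  have hW : ∀ τ, fderiv ℝ (Z τ t) z = fderiv ℝ (Z t t) z
      + ∫ r in t..τ, fderiv ℝ (G r) (Z r t z) ∘L fderiv ℝ (Z r t) z := by
    intro τ
    have hZτ : Z τ t = fun w => id (Z t t w) + ∫ r in t..τ, G r (Z r t w) := funext fun w => by
      rw [integral_eq_sub_of_hasDerivAt (fun r _ => hZ.hasDerivAt r t w)
        ((hZ.contDiff_field.continuous.comp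
          (continuous_id.prodMk (hZ.continuous_apply t w))).intervalIntegrable _ _), id_eq]
      abel
    rw [hZτ, (hasFDerivAt_comp_add_intervalIntegral_comp (hZ.contDiff_uncurry t) contDiff_id
      hZ.contDiff_field t τ z).fderiv, fderiv_id, id_comp]
  rw [funext hW]
  exact (integral_hasDerivAt_right (hAW.intervalIntegrable _ _)
    (hAW.stronglyMeasurableAtFilter _ _) hAW.continuousAt).const_add _

theorem hasDerivAt_fderiv_inv (hZ : IsC1Flow G Z) (t : ℝ) (z : E) (s : ℝ) :
    HasDerivAt (fun s => fderiv ℝ (Z t s) (Z s t z))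
      (-(fderiv ℝ (Z t s) (Z s t z) ∘L fderiv ℝ (G s) (Z s t z))) s := by
  have h := (hZ.hasDerivAt_fderiv t z s).of_mul_eq_one (fun r => hZ.fderiv_comp_fderiv_inv t z r)
    (fun r => hZ.fderiv_comp_fderiv_flip t r z)
  rwa [mul_def, mul_def, comp_assoc, comp_assoc, hZ.fderiv_comp_fderiv_inv, comp_id] at h

variable [CompleteSpace F] {f₀ : E → F} {g : ℝ → E → F} {f : ℝ → E → F}

theorem hasFDerivAt_transport (hZ : IsC1Flow G Z) (hf₀ : ContDiff ℝ 1 f₀)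
    (hg : ContDiff ℝ 1 (uncurry g))
    (hf : ∀ t z, f t z = f₀ (Z 0 t z) + ∫ s in (0 : ℝ)..t, g s (Z s t z)) (t : ℝ) (z : E)
    (s : ℝ) :
    HasFDerivAt (f s)
      ((fderiv ℝ f₀ (Z 0 t z) ∘L fderiv ℝ (Z 0 t) z
        + ∫ r in (0 : ℝ)..s, fderiv ℝ (g r) (Z r t z) ∘L fderiv ℝ (Z r t) z)
        ∘L fderiv ℝ (Z t s) (Z s t z)) (Z s t z) := by
  have hlag : f s = (fun y => f₀ (Z 0 t y) + ∫ r in (0 : ℝ)..s, g r (Z r t y)) ∘ Z t s :=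
    funext fun w => by simp only [hf, Function.comp_apply, hZ.apply_apply]
  rw [hlag]
  refine HasFDerivAt.comp _ ?_ (hZ.differentiableAt t s _).hasFDerivAt
  rw [hZ.apply_apply, hZ.apply_self]
  exact hasFDerivAt_comp_add_intervalIntegral_comp (hZ.contDiff_uncurry t) hf₀ hg 0 s z

theorem hasDerivAt_fderiv_transport (hZ : IsC1Flow G Z) (hf₀ : ContDiff ℝ 1 f₀)
    (hg : ContDiff ℝ 1 (uncurry g))
    (hf : ∀ t z, f t z = f₀ (Z 0 t z) + ∫ s in (0 : ℝ)..t, g s (Z s t z)) (t : ℝ) (z : E)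
    (s : ℝ) :
    HasDerivAt (fun s => fderiv ℝ (f s) (Z s t z))
      (fderiv ℝ (g s) (Z s t z) - fderiv ℝ (f s) (Z s t z) ∘L fderiv ℝ (G s) (Z s t z)) s := by
  set W := fun r => fderiv ℝ (Z r t) z
  set V := fun r => fderiv ℝ (Z t r) (Z r t z)
  set M := fun s => fderiv ℝ f₀ (Z 0 t z) ∘L W 0
    + ∫ r in (0 : ℝ)..s, fderiv ℝ (g r) (Z r t z) ∘L W r
  have hfM : ∀ s, fderiv ℝ (f s) (Z s t z) = M s ∘L V s := fun s =>
    (hZ.hasFDerivAt_transport hf₀ hg hf t z s).fderiv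
  have hgW : Continuous fun r => fderiv ℝ (g r) (Z r t z) ∘L W r :=
    (hg.continuous_fderiv_uncurry_right (hZ.continuous_apply t z)).clm_comp
      ((hZ.contDiff_uncurry t).continuous_fderiv_uncurry_right continuous_const)
  have hM : HasDerivAt M (fderiv ℝ (g s) (Z s t z) ∘L W s) s :=
    (integral_hasDerivAt_right (hgW.intervalIntegrable _ _) (hgW.stronglyMeasurableAtFilter _ _)
      hgW.continuousAt).const_add _
  rw [funext hfM, hfM]
  convert hM.clm_comp (hZ.hasDerivAt_fderiv_inv t z s) using 1
  have hWV : W s ∘L V s = ContinuousLinearMap.id ℝ E := hZ.fderiv_comp_fderiv_inv t z s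
  rw [comp_assoc (fderiv ℝ (g s) _), hWV, comp_id, comp_neg, comp_assoc, sub_eq_add_neg]

end IsC1Flow

/-- For `f(t,z) = f₀(Z(0,t,z)) + ∫₀ᵗ g(s,Z(s,t,z)) ds` with `f₀, g ∈ C¹` (not
necessarily C²) and `Z` the complete C¹ flow of `ż = G(s,z)`, `G ∈ C¹`, the
derivative `∂_z f` exists and satisfies the integral equation
`∂_zf(t,z) = (∂_zf₀)(Z(0,t,z)) - ∫₀ᵗ (∂_zf)(s,Z(s,t,z))·(∂_zG)(s,Z(s,t,z)) ds
+ ∫₀ᵗ (∂_zg)(s,Z(s,t,z)) ds`. -/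
theorem transport_derivative_integral_equation {n : ℕ}
    (G : ℝ → EuclideanSpace ℝ (Fin n) → EuclideanSpace ℝ (Fin n))
    (Z : ℝ → ℝ → EuclideanSpace ℝ (Fin n) → EuclideanSpace ℝ (Fin n))
    (g : ℝ → EuclideanSpace ℝ (Fin n) → ℝ)
    (f₀ : EuclideanSpace ℝ (Fin n) → ℝ)
    (f : ℝ → EuclideanSpace ℝ (Fin n) → ℝ)
    (hG : ContDiff ℝ 1 (fun p : ℝ × EuclideanSpace ℝ (Fin n) => G p.1 p.2))
    (hg : ContDiff ℝ 1 (fun p : ℝ × EuclideanSpace ℝ (Fin n) => g p.1 p.2))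
    (hf₀ : ContDiff ℝ 1 f₀)
    (hZC1 : ContDiff ℝ 1
      (fun p : ℝ × ℝ × EuclideanSpace ℝ (Fin n) => Z p.1 p.2.1 p.2.2))
    (hZinit : ∀ t z, Z t t z = z)
    (hZflow : ∀ s t z, HasDerivAt (fun s' => Z s' t z) (G s (Z s t z)) s)
    (hf : ∀ t z, f t z = f₀ (Z 0 t z) + ∫ s in (0 : ℝ)..t, g s (Z s t z)) :
    ∀ t z,
      DifferentiableAt ℝ (f t) z ∧
      fderiv ℝ (f t) z
        = fderiv ℝ f₀ (Z 0 t z)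
          - (∫ s in (0 : ℝ)..t,
              (fderiv ℝ (f s) (Z s t z)).comp (fderiv ℝ (G s) (Z s t z)))
          + ∫ s in (0 : ℝ)..t, fderiv ℝ (g s) (Z s t z) := by
  intro t z
  have hZ : IsC1Flow G Z := ⟨hG, hZC1, hZinit, hZflow⟩
  have hf0 : f 0 = f₀ := funext fun w => by rw [hf, hZinit, integral_same, add_zero]
  refine ⟨hZinit t z ▸ (hZ.hasFDerivAt_transport hf₀ hg hf t z t).differentiableAt, ?_⟩
  have h := eq_sub_integral_comp_add_integral_of_hasDerivAt
    (hZ.hasDerivAt_fderiv_transport hf₀ hg hf t z)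
    (hG.continuous_fderiv_uncurry_right (hZ.continuous_apply t z))
    (hg.continuous_fderiv_uncurry_right (hZ.continuous_apply t z)) 0 t
  rwa [hZinit, hf0] at h
end
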